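/- arXiv:2007.12936 — 2 statements merged into one kernel-verified Lean document; each statement's English description precedes it below -/
import Mathlib

section
/- For every B ∈ (0,1) and every x ∈ (-1,-B), the function U satisfies (LU)(x) = -c₁(1+x)/2, and consequently (LU)(x) ≥ -c₁(1-x)/2, where (Lf)(x) = (μ²/2)·(1-x²)²·f''(x). -/
/-!
On `(-1, -B)` the function `U` is the reflection `y ↦ U₁(-y) + c₂`, so `U''(x) = U₁''(-x)`.
Writing `U₁ = c₁/(4μ²)·(1-x)(w + k)` with `w = log((1+x)/(1-x))`, `w' = 2/(1-x²)`, one gets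
`U₁' = c₁/(4μ²)·(2/(1+x) - w - k)` and `U₁'' = -c₁/(μ²(1-x)(1+x)²)`. Hence
`(LU)(x) = (μ²/2)(1-x²)²·U₁''(-x) = -c₁(1+x)/2`, which dominates `-c₁(1-x)/2` since `x < 0`.
-/

noncomputable section

/-- The function `U₁(x) = (c₁(1-x)/(4μ²))·(ln((1+x)/(1-x)) + 2/(1-B²))`. -/
def U₁ (μ c₁ B x : ℝ) : ℝ :=
  c₁ * (1 - x) / (4 * μ ^ 2) * (Real.log ((1 + x) / (1 - x)) + 2 / (1 - B ^ 2))

/-- The function `U` of the switching problem: `U(x) = U₁(x)` for `x ∈ (-B, 1]` and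
`U(x) = U₁(-x) + c₂` for `x ∈ (-1, -B]`. -/
def Ufun (μ c₁ c₂ B x : ℝ) : ℝ :=
  if -B < x then U₁ μ c₁ B x else U₁ μ c₁ B (-x) + c₂

open Filter Topology Set

def U₁' (μ c₁ B x : ℝ) : ℝ :=
  c₁ / (4 * μ ^ 2) * (2 / (1 + x) - (Real.log ((1 + x) / (1 - x)) + 2 / (1 - B ^ 2)))

def U₁'' (μ c₁ x : ℝ) : ℝ :=
  -c₁ / (μ ^ 2 * (1 - x) * (1 + x) ^ 2)

section Calculus

variable {f f' : ℝ → ℝ} {a x : ℝ}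

theorem HasDerivAt.comp_neg' (h : HasDerivAt f a (-x)) :
    HasDerivAt (fun y => f (-y)) (-a) x := by
  simpa [Function.comp_def] using h.comp x (hasDerivAt_neg x)

theorem hasDerivAt_deriv_of_eventually_hasDerivAt (hf : ∀ᶠ y in 𝓝 x, HasDerivAt f (f' y) y)
    (hf' : HasDerivAt f' a x) : HasDerivAt (deriv f) a x :=
  hf'.congr_of_eventuallyEq (hf.mono fun _ hy => hy.deriv)

end Calculus

variable {μ c₁ c₂ B x : ℝ}

theorem denominators_ne_zero (hx : x ∈ Ioo (-1 : ℝ) 1) :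
    1 - x ≠ 0 ∧ 1 + x ≠ 0 ∧ 1 - x ^ 2 ≠ 0 := by
  obtain ⟨h₁, h₂⟩ := hx
  exact ⟨by linarith, by linarith, by nlinarith⟩

theorem hasDerivAt_log_div_one_sub (hx : x ∈ Ioo (-1 : ℝ) 1) :
    HasDerivAt (fun y => Real.log ((1 + y) / (1 - y))) (2 / (1 - x ^ 2)) x := by
  obtain ⟨hm, hp, h2⟩ := denominators_ne_zero hx
  have hq : HasDerivAt (fun y => (1 + y) / (1 - y)) (2 / (1 - x) ^ 2) x := by
    refine (((hasDerivAt_id' x).const_add 1).fun_div ((hasDerivAt_id' x).const_sub 1) hm)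
      |>.congr_deriv ?_
    ring
  refine (hq.log (div_ne_zero hp hm)).congr_deriv ?_
  field_simp
  ring

theorem hasDerivAt_U₁ (hx : x ∈ Ioo (-1 : ℝ) 1) :
    HasDerivAt (U₁ μ c₁ B) (U₁' μ c₁ B x) x := by
  obtain ⟨hm, hp, h2⟩ := denominators_ne_zero hx
  have hl : HasDerivAt (fun y => c₁ * (1 - y) / (4 * μ ^ 2)) (-(c₁ / (4 * μ ^ 2))) x := by
    refine ((((hasDerivAt_id' x).const_sub 1).const_mul c₁).div_const (4 * μ ^ 2)).congr_deriv ?_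
    ring
  refine (hl.mul ((hasDerivAt_log_div_one_sub hx).add_const (2 / (1 - B ^ 2)))).congr_deriv ?_
  unfold U₁'
  field_simp
  ring

theorem hasDerivAt_U₁' (hx : x ∈ Ioo (-1 : ℝ) 1) :
    HasDerivAt (U₁' μ c₁ B) (U₁'' μ c₁ x) x := by
  obtain ⟨hm, hp, h2⟩ := denominators_ne_zero hx
  have hi : HasDerivAt (fun y => 2 / (1 + y)) (-2 / (1 + x) ^ 2) x := by
    refine (((hasDerivAt_id' x).const_add 1).inv hp |>.const_mul 2).congr_deriv ?_
    ring
  refine ((hi.sub ((hasDerivAt_log_div_one_sub hx).add_const (2 / (1 - B ^ 2)))).const_mul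
    (c₁ / (4 * μ ^ 2))).congr_deriv ?_
  unfold U₁''
  field_simp
  ring

theorem Ufun_eq_of_le (hx : x ≤ -B) : Ufun μ c₁ c₂ B x = U₁ μ c₁ B (-x) + c₂ := by
  rw [Ufun, if_neg hx.not_gt]

theorem Ufun_eventuallyEq_reflect (hx : x < -B) :
    Ufun μ c₁ c₂ B =ᶠ[𝓝 x] fun y => U₁ μ c₁ B (-y) + c₂ :=
  eventually_of_mem (Iio_mem_nhds hx) fun _ hy => Ufun_eq_of_le (le_of_lt hy)

theorem neg_mem_Ioo_of_mem_Ioo (hB : 0 < B) (hx : x ∈ Ioo (-1) (-B)) : -x ∈ Ioo (-1 : ℝ) 1 :=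
  ⟨by linarith [hx.2], by linarith [hx.1]⟩

theorem hasDerivAt_Ufun (hB : 0 < B) (hx : x ∈ Ioo (-1) (-B)) :
    HasDerivAt (Ufun μ c₁ c₂ B) (-U₁' μ c₁ B (-x)) x :=
  ((hasDerivAt_U₁ (neg_mem_Ioo_of_mem_Ioo hB hx)).comp_neg'.add_const c₂).congr_of_eventuallyEq
    (Ufun_eventuallyEq_reflect hx.2)

theorem hasDerivAt_deriv_Ufun (hB : 0 < B) (hx : x ∈ Ioo (-1) (-B)) :
    HasDerivAt (deriv (Ufun μ c₁ c₂ B)) (U₁'' μ c₁ (-x)) x := by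
  have hD1 : ∀ᶠ y in 𝓝 x, HasDerivAt (Ufun μ c₁ c₂ B) (-U₁' μ c₁ B (-y)) y :=
    eventually_of_mem (Ioo_mem_nhds hx.1 hx.2) fun _ hy => hasDerivAt_Ufun hB hy
  simpa using hasDerivAt_deriv_of_eventually_hasDerivAt hD1
    (hasDerivAt_U₁' (neg_mem_Ioo_of_mem_Ioo hB hx)).comp_neg'.neg

theorem generator_U₁''_neg (hμ : μ ≠ 0) (hx : x ∈ Ioo (-1 : ℝ) 1) :
    μ ^ 2 / 2 * (1 - x ^ 2) ^ 2 * U₁'' μ c₁ (-x) = -(c₁ * (1 + x)) / 2 := by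
  obtain ⟨hm, hp, -⟩ := denominators_ne_zero hx
  rw [U₁'', sub_neg_eq_add, ← sub_eq_add_neg]
  field_simp
  ring

theorem LU_on_switching_general (μ c₁ c₂ : ℝ) (hμ : 0 < μ) (hc₁ : 0 < c₁)
    (B : ℝ) (hB : B ∈ Set.Ioo (0 : ℝ) 1) :
    ∀ x ∈ Set.Ioo (-1 : ℝ) (-B),
      (DifferentiableAt ℝ (Ufun μ c₁ c₂ B) x
        ∧ DifferentiableAt ℝ (deriv (Ufun μ c₁ c₂ B)) x) ∧
      μ ^ 2 / 2 * (1 - x ^ 2) ^ 2 * deriv (deriv (Ufun μ c₁ c₂ B)) x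
        = -(c₁ * (1 + x)) / 2 ∧
      μ ^ 2 / 2 * (1 - x ^ 2) ^ 2 * deriv (deriv (Ufun μ c₁ c₂ B)) x
        ≥ -(c₁ * (1 - x)) / 2 := by
  intro x hx
  have hx₁ : x ∈ Ioo (-1 : ℝ) 1 := ⟨hx.1, by linarith [hx.2, hB.1]⟩
  have hD2 : HasDerivAt (deriv (Ufun μ c₁ c₂ B)) (U₁'' μ c₁ (-x)) x :=
    hasDerivAt_deriv_Ufun hB.1 hx
  have hLU : μ ^ 2 / 2 * (1 - x ^ 2) ^ 2 * deriv (deriv (Ufun μ c₁ c₂ B)) x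
      = -(c₁ * (1 + x)) / 2 := by
    rw [hD2.deriv, generator_U₁''_neg hμ.ne' hx₁]
  refine ⟨⟨(hasDerivAt_Ufun hB.1 hx).differentiableAt, hD2.differentiableAt⟩, hLU, ?_⟩
  rw [hLU]
  nlinarith [hx.2, hB.1]

/-- For every `B ∈ (0,1)` and every `x ∈ (-1,-B)`, the function `U`
satisfies `(LU)(x) = -c₁(1+x)/2`, and consequently `(LU)(x) ≥ -c₁(1-x)/2`, where
`(Lf)(x) = (μ²/2)(1-x²)² f''(x)`. -/
theorem LU_on_switching (μ c₀ c₁ c₂ : ℝ) (hμ : 0 < μ) (hc₀ : 0 < c₀) (hc₁ : 0 < c₁)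
    (hc₂ : 0 < c₂) (B : ℝ) (hB : B ∈ Set.Ioo (0 : ℝ) 1) :
    ∀ x ∈ Set.Ioo (-1 : ℝ) (-B),
      (DifferentiableAt ℝ (Ufun μ c₁ c₂ B) x
        ∧ DifferentiableAt ℝ (deriv (Ufun μ c₁ c₂ B)) x) ∧
      μ ^ 2 / 2 * (1 - x ^ 2) ^ 2 * deriv (deriv (Ufun μ c₁ c₂ B)) x
        = -(c₁ * (1 + x)) / 2 ∧
      μ ^ 2 / 2 * (1 - x ^ 2) ^ 2 * deriv (deriv (Ufun μ c₁ c₂ B)) x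
        ≥ -(c₁ * (1 - x)) / 2 :=
  LU_on_switching_general μ c₁ c₂ hμ hc₁ B hB
end
end

section
/- Let B ∈ (0,1) and A ∈ (0,1), and define U and V₀ (with the constant K) as below. Then: (i) V₀(A) = U(A) (continuous fit holds by the choice of K); and (ii) V₀'(A) = U'(A) (smooth fit) holds if and only if A solves equation (A). -/
noncomputable section

/-- The constant `K` of the continuous-fit condition. -/
def Kconst (μ c₀ c₁ A B : ℝ) : ℝ :=
  (c₁ * (1 - A) / (4 * μ ^ 2) + c₀ * A / (2 * μ ^ 2)) * Real.log ((1 + A) / (1 - A))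
    + c₁ * (1 - A) / (2 * μ ^ 2 * (1 - B ^ 2))

/-- The function `V₀(x) = (c₀x/(2μ²))·ln((1-x)/(1+x)) + K`. -/
def V₀ (μ c₀ c₁ A B x : ℝ) : ℝ :=
  c₀ * x / (2 * μ ^ 2) * Real.log ((1 - x) / (1 + x)) + Kconst μ c₀ c₁ A B

/-! Both sides are explicit in `L(x) = ln((1+x)/(1-x))`, whose derivative on `(-1,1)` is
`2/(1-x²)`, and `ln((1-x)/(1+x)) = -L(x)`. Continuous fit is then a ring identity, and the
derivative gap factors as `V₀'(A) - U'(A) = -(c₀/(2μ²))·(lhs(A) - rhs(A))` of equation (A),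
so it vanishes exactly when (A) holds. -/

open Real Filter Topology

lemma log_one_sub_div_one_add (x : ℝ) :
    log ((1 - x) / (1 + x)) = -log ((1 + x) / (1 - x)) := by
  rw [← inv_div, log_inv]

lemma hasDerivAt_log_one_add_div_one_sub {x : ℝ} (hx : x ∈ Set.Ioo (-1 : ℝ) 1) :
    HasDerivAt (fun y => log ((1 + y) / (1 - y))) (2 / (1 - x ^ 2)) x := by
  have hp : 1 + x ≠ 0 := by linarith [hx.1]
  have hm : 1 - x ≠ 0 := by linarith [hx.2]
  have hq : HasDerivAt (fun y => (1 + y) / (1 - y)) (2 / (1 - x) ^ 2) x := by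
    refine (((hasDerivAt_id x).const_add 1).div ((hasDerivAt_id x).const_sub 1) hm).congr_deriv ?_
    simp only [id]
    ring
  refine (hq.log (div_ne_zero hp hm)).congr_deriv ?_
  rw [show 1 - x ^ 2 = (1 - x) * (1 + x) by ring]
  field_simp

lemma hasDerivAt_log_one_sub_div_one_add {x : ℝ} (hx : x ∈ Set.Ioo (-1 : ℝ) 1) :
    HasDerivAt (fun y => log ((1 - y) / (1 + y))) (-(2 / (1 - x ^ 2))) x := by
  simp only [log_one_sub_div_one_add]
  exact (hasDerivAt_log_one_add_div_one_sub hx).neg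

section

variable (μ c₀ c₁ c₂ A B : ℝ) {x : ℝ}

lemma hasDerivAt_U₁_s15 (hx : x ∈ Set.Ioo (-1 : ℝ) 1) :
    HasDerivAt (U₁ μ c₁ B)
      (-(c₁ / (4 * μ ^ 2)) * (log ((1 + x) / (1 - x)) + 2 / (1 - B ^ 2))
        + c₁ * (1 - x) / (4 * μ ^ 2) * (2 / (1 - x ^ 2))) x := by
  have hlin : HasDerivAt (fun y => c₁ * (1 - y) / (4 * μ ^ 2)) (-(c₁ / (4 * μ ^ 2))) x := by
    refine ((((hasDerivAt_id x).const_sub 1).const_mul c₁).div_const (4 * μ ^ 2)).congr_deriv ?_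
    ring
  exact hlin.mul ((hasDerivAt_log_one_add_div_one_sub hx).add_const _)

lemma hasDerivAt_V₀ (hx : x ∈ Set.Ioo (-1 : ℝ) 1) :
    HasDerivAt (V₀ μ c₀ c₁ A B)
      (c₀ / (2 * μ ^ 2) * log ((1 - x) / (1 + x))
        + c₀ * x / (2 * μ ^ 2) * -(2 / (1 - x ^ 2))) x := by
  have hlin : HasDerivAt (fun y => c₀ * y / (2 * μ ^ 2)) (c₀ / (2 * μ ^ 2)) x := by
    refine (((hasDerivAt_id x).const_mul c₀).div_const (2 * μ ^ 2)).congr_deriv ?_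
    ring
  exact (hlin.mul (hasDerivAt_log_one_sub_div_one_add hx)).add_const (Kconst μ c₀ c₁ A B)

lemma Ufun_eventuallyEq_U₁ (hx : -B < x) : Ufun μ c₁ c₂ B =ᶠ[𝓝 x] U₁ μ c₁ B := by
  filter_upwards [Ioi_mem_nhds hx] with y hy
  exact if_pos hy

lemma V₀_self_eq_U₁ : V₀ μ c₀ c₁ A B A = U₁ μ c₁ B A := by
  simp only [V₀, Kconst, U₁, log_one_sub_div_one_add, ← div_div]
  ring

lemma smoothFit_gap_eq (hμ : μ ≠ 0) (hc₀ : c₀ ≠ 0) (hA : A ∈ Set.Ioo (-1 : ℝ) 1) :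
    (c₀ / (2 * μ ^ 2) * log ((1 - A) / (1 + A)) + c₀ * A / (2 * μ ^ 2) * -(2 / (1 - A ^ 2)))
      - (-(c₁ / (4 * μ ^ 2)) * (log ((1 + A) / (1 - A)) + 2 / (1 - B ^ 2))
        + c₁ * (1 - A) / (4 * μ ^ 2) * (2 / (1 - A ^ 2)))
    = -(c₀ / (2 * μ ^ 2)) *
      ((c₁ / (2 * c₀) - 1) * log ((1 - A) / (1 + A))
        + (2 / (1 + A)) * (c₁ / (2 * c₀) + A / (1 - A)) - c₁ / (c₀ * (1 - B ^ 2))) := by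
  have hp : 1 + A ≠ 0 := by linarith [hA.1]
  have hm : 1 - A ≠ 0 := by linarith [hA.2]
  have hsq : 1 - A ^ 2 = (1 - A) * (1 + A) := by ring
  rw [hsq, log_one_sub_div_one_add]
  field_simp
  ring

end

theorem continuous_and_smooth_fit_at_A_general (μ c₀ c₁ c₂ : ℝ) (hμ : 0 < μ) (hc₀ : 0 < c₀)
    (A B : ℝ) (hA : A ∈ Set.Ioo (0 : ℝ) 1) (hB : B ∈ Set.Ioo (0 : ℝ) 1) :
    V₀ μ c₀ c₁ A B A = Ufun μ c₁ c₂ B A ∧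
    (deriv (V₀ μ c₀ c₁ A B) A = deriv (Ufun μ c₁ c₂ B) A ↔
      (c₁ / (2 * c₀) - 1) * Real.log ((1 - A) / (1 + A))
        + (2 / (1 + A)) * (c₁ / (2 * c₀) + A / (1 - A)) = c₁ / (c₀ * (1 - B ^ 2))) := by
  have hA' : A ∈ Set.Ioo (-1 : ℝ) 1 := Set.Ioo_subset_Ioo_left (by norm_num) hA
  have hUA : Ufun μ c₁ c₂ B =ᶠ[𝓝 A] U₁ μ c₁ B :=
    Ufun_eventuallyEq_U₁ μ c₁ c₂ B (by linarith [hA.1, hB.1])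
  refine ⟨(V₀_self_eq_U₁ μ c₀ c₁ A B).trans hUA.eq_of_nhds.symm, ?_⟩
  rw [hUA.deriv_eq, (hasDerivAt_V₀ μ c₀ c₁ A B hA').deriv, (hasDerivAt_U₁_s15 μ c₁ B hA').deriv,
    ← sub_eq_zero, smoothFit_gap_eq μ c₀ c₁ A B hμ.ne' hc₀.ne' hA', mul_eq_zero,
    or_iff_right (neg_ne_zero.mpr (by positivity)), sub_eq_zero]

/-- Let `A, B ∈ (0,1)`. Then: (i) `V₀(A) = U(A)` (continuous fit
holds by the choice of `K`); and (ii) `V₀'(A) = U'(A)` (smooth fit) holds if and only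
if `A` solves equation (A). -/
theorem continuous_and_smooth_fit_at_A (μ c₀ c₁ c₂ : ℝ) (hμ : 0 < μ) (hc₀ : 0 < c₀)
    (hc₁ : 0 < c₁) (hc₂ : 0 < c₂) (A B : ℝ) (hA : A ∈ Set.Ioo (0 : ℝ) 1)
    (hB : B ∈ Set.Ioo (0 : ℝ) 1) :
    V₀ μ c₀ c₁ A B A = Ufun μ c₁ c₂ B A ∧
    (deriv (V₀ μ c₀ c₁ A B) A = deriv (Ufun μ c₁ c₂ B) A ↔
      (c₁ / (2 * c₀) - 1) * Real.log ((1 - A) / (1 + A))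
        + (2 / (1 + A)) * (c₁ / (2 * c₀) + A / (1 - A)) = c₁ / (c₀ * (1 - B ^ 2))) :=
  continuous_and_smooth_fit_at_A_general μ c₀ c₁ c₂ hμ hc₀ A B hA hB
end
end
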